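/- Given ℝ-trees M₀, M₁, M₂ and isometric embeddings f₁ : M₀ → M₁ and f₂ : M₀ → M₂, there exist an ℝ-tree N and isometric embeddings g₁ : M₁ → N and g₂ : M₂ → N such that g₁ ∘ f₁ = g₂ ∘ f₂. -/

import Mathlib

/-!
An ℝ-tree is the same thing as a geodesic metric space satisfying Gromov's four-point
condition (`0`-hyperbolicity). Both properties pass to completions, and in the completion
of `M₁` the image of the completion of `M₀` is closed and convex, so it has a gate `p`
(nearest-point map); likewise `q` in the completion of `M₂`. Glue the two completions along
the completed `M₀` with Mathlib's `Metric.GlueSpace`: the glued distance between `x` and `y`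
is `d(x, p x) + d(p x, q y) + d(q y, y)`, and from this formula the glued space is again
geodesic and `0`-hyperbolic. When `M₀` is empty, glue along a point instead.
-/

open Set Metric

/-- A geodesic segment in a metric space: the image of an isometric embedding of a
closed real interval `[0, ℓ]`, going from `a` to `b`. -/
def IsGeodesicSegmentFromTo {M : Type*} [MetricSpace M] (s : Set M) (a b : M) : Prop :=
  ∃ ℓ : ℝ, 0 ≤ ℓ ∧ ∃ γ : ℝ → M,
    (∀ u ∈ Set.Icc (0:ℝ) ℓ, ∀ v ∈ Set.Icc (0:ℝ) ℓ, dist (γ u) (γ v) = |u - v|) ∧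
    γ 0 = a ∧ γ ℓ = b ∧ s = γ '' Set.Icc 0 ℓ

/-- An arc from `a` to `b`: the (injective, continuous) image of a closed real
interval `[0, ℓ]`; a single point when `a = b`. -/
def IsArcFromTo {M : Type*} [MetricSpace M] (s : Set M) (a b : M) : Prop :=
  ∃ ℓ : ℝ, 0 ≤ ℓ ∧ ∃ γ : ℝ → M,
    ContinuousOn γ (Set.Icc 0 ℓ) ∧ Set.InjOn γ (Set.Icc 0 ℓ) ∧
    γ 0 = a ∧ γ ℓ = b ∧ s = γ '' Set.Icc 0 ℓ

/-- An ℝ-tree: a metric space in which any two points are joined by a unique arc,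
and that arc is a geodesic segment. -/
def IsRTree (M : Type*) [MetricSpace M] : Prop :=
  ∀ a b : M, ∃ s : Set M,
    IsArcFromTo s a b ∧ IsGeodesicSegmentFromTo s a b ∧
    ∀ t : Set M, IsArcFromTo t a b → t = s

/-- The geodesic segment `[a, b]` in an ℝ-tree: the unique arc from `a` to `b`. -/
noncomputable def seg {M : Type*} [MetricSpace M] (h : IsRTree M) (a b : M) : Set M :=
  (h a b).choose

universe u

/-- A distance-preserving map (isometric embedding) between metric spaces. -/
def IsIsometric {A B : Type*} [MetricSpace A] [MetricSpace B] (f : A → B) : Prop :=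
  ∀ x y : A, dist (f x) (f y) = dist x y

section PathAppend

variable {α : Type*} {γ₁ γ₂ : ℝ → α} {L₁ : ℝ}

noncomputable def pathAppend (γ₁ γ₂ : ℝ → α) (L₁ : ℝ) (t : ℝ) : α :=
  if t ≤ L₁ then γ₁ t else γ₂ (t - L₁)

lemma pathAppend_of_le {t : ℝ} (ht : t ≤ L₁) : pathAppend γ₁ γ₂ L₁ t = γ₁ t := if_pos ht

lemma pathAppend_of_lt {t : ℝ} (ht : L₁ < t) : pathAppend γ₁ γ₂ L₁ t = γ₂ (t - L₁) :=
  if_neg ht.not_ge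

lemma pathAppend_cases {t L₂ : ℝ} (ht : t ∈ Icc 0 (L₁ + L₂)) :
    (t ∈ Icc 0 L₁ ∧ pathAppend γ₁ γ₂ L₁ t = γ₁ t) ∨
      (L₁ < t ∧ t - L₁ ∈ Icc 0 L₂ ∧ pathAppend γ₁ γ₂ L₁ t = γ₂ (t - L₁)) := by
  rcases le_or_gt t L₁ with h | h
  · exact .inl ⟨⟨ht.1, h⟩, pathAppend_of_le h⟩
  · exact .inr ⟨h, ⟨by linarith, by linarith [ht.2]⟩, pathAppend_of_lt h⟩

lemma pathAppend_zero (h : 0 ≤ L₁) : pathAppend γ₁ γ₂ L₁ 0 = γ₁ 0 := pathAppend_of_le h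

lemma pathAppend_add {L₂ : ℝ} (h : γ₁ L₁ = γ₂ 0) (hL₂ : 0 ≤ L₂) :
    pathAppend γ₁ γ₂ L₁ (L₁ + L₂) = γ₂ L₂ := by
  rcases hL₂.eq_or_lt with rfl | hL₂
  · rw [add_zero, pathAppend_of_le le_rfl, h]
  · rw [pathAppend_of_lt (by linarith), add_sub_cancel_left]

end PathAppend

section GeodesicPath

variable {X : Type*} [MetricSpace X]

def IsBetween (x m y : X) : Prop := dist x m + dist m y = dist x y

structure IsGeodesicPath (γ : ℝ → X) (L : ℝ) (a b : X) : Prop where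
  nonneg : 0 ≤ L
  dist_eq : ∀ u ∈ Icc 0 L, ∀ v ∈ Icc 0 L, dist (γ u) (γ v) = |u - v|
  source : γ 0 = a
  target : γ L = b

variable (X) in
def IsGeodesicSpace : Prop :=
  ∀ a b : X, ∃ γ, IsGeodesicPath γ (dist a b) a b

namespace IsGeodesicPath

variable {γ : ℝ → X} {L t : ℝ} {a b : X}

lemma left_mem (h : IsGeodesicPath γ L a b) : (0 : ℝ) ∈ Icc 0 L := ⟨le_rfl, h.nonneg⟩

lemma right_mem (h : IsGeodesicPath γ L a b) : L ∈ Icc 0 L := ⟨h.nonneg, le_rfl⟩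

lemma dist_source (h : IsGeodesicPath γ L a b) (ht : t ∈ Icc 0 L) : dist a (γ t) = t := by
  rw [← h.source, h.dist_eq 0 h.left_mem t ht, zero_sub, abs_neg, abs_of_nonneg ht.1]

lemma dist_target (h : IsGeodesicPath γ L a b) (ht : t ∈ Icc 0 L) : dist (γ t) b = L - t := by
  rw [← h.target, h.dist_eq t ht L h.right_mem, abs_sub_comm, abs_of_nonneg (by linarith [ht.2])]

lemma dist_source_target (h : IsGeodesicPath γ L a b) : dist a b = L := by
  simpa [h.target] using h.dist_source h.right_mem

lemma isBetween (h : IsGeodesicPath γ L a b) (ht : t ∈ Icc 0 L) : IsBetween a (γ t) b := by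
  rw [IsBetween, h.dist_source ht, h.dist_target ht, h.dist_source_target]
  ring

lemma continuousOn (h : IsGeodesicPath γ L a b) : ContinuousOn γ (Icc 0 L) :=
  LipschitzOnWith.continuousOn (K := 1) <| LipschitzOnWith.of_dist_le_mul fun u hu v hv => by
    rw [h.dist_eq u hu v hv, Real.dist_eq, NNReal.coe_one, one_mul]

lemma injOn (h : IsGeodesicPath γ L a b) : InjOn γ (Icc 0 L) := fun u hu v hv huv => by
  have := h.dist_eq u hu v hv
  rwa [huv, dist_self, eq_comm, abs_eq_zero, sub_eq_zero] at this

lemma isArcFromTo (h : IsGeodesicPath γ L a b) : IsArcFromTo (γ '' Icc 0 L) a b :=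
  ⟨L, h.nonneg, γ, h.continuousOn, h.injOn, h.source, h.target, rfl⟩

lemma isGeodesicSegmentFromTo (h : IsGeodesicPath γ L a b) :
    IsGeodesicSegmentFromTo (γ '' Icc 0 L) a b :=
  ⟨L, h.nonneg, γ, h.dist_eq, h.source, h.target, rfl⟩

lemma reverse (h : IsGeodesicPath γ L a b) : IsGeodesicPath (fun s => γ (L - s)) L b a where
  nonneg := h.nonneg
  dist_eq u hu v hv := by
    rw [h.dist_eq _ ⟨by linarith [hu.2], by linarith [hu.1]⟩ _
      ⟨by linarith [hv.2], by linarith [hv.1]⟩, abs_sub_comm]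
    ring_nf
  source := by simpa using h.target
  target := by simpa using h.source

lemma restrict (h : IsGeodesicPath γ L a b) (ht : t ∈ Icc 0 L) : IsGeodesicPath γ t a (γ t) where
  nonneg := ht.1
  dist_eq u hu v hv := h.dist_eq u ⟨hu.1, hu.2.trans ht.2⟩ v ⟨hv.1, hv.2.trans ht.2⟩
  source := h.source
  target := rfl

lemma shift (h : IsGeodesicPath γ L a b) (ht : t ∈ Icc 0 L) :
    IsGeodesicPath (fun s => γ (s + t)) (L - t) (γ t) b where
  nonneg := by linarith [ht.2]
  dist_eq u hu v hv := by
    rw [h.dist_eq _ ⟨by linarith [hu.1, ht.1], by linarith [hu.2]⟩ _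
      ⟨by linarith [hv.1, ht.1], by linarith [hv.2]⟩]
    ring_nf
  source := by simp
  target := by simpa using h.target

lemma map {Y : Type*} [MetricSpace Y] {f : X → Y} (hf : Isometry f)
    (h : IsGeodesicPath γ L a b) : IsGeodesicPath (f ∘ γ) L (f a) (f b) where
  nonneg := h.nonneg
  dist_eq u hu v hv := by simp only [Function.comp, hf.dist_eq, h.dist_eq u hu v hv]
  source := by simp [h.source]
  target := by simp [h.target]

variable {γ₁ γ₂ : ℝ → X} {L₁ L₂ : ℝ} {m : X}

lemma append (h₁ : IsGeodesicPath γ₁ L₁ a m) (h₂ : IsGeodesicPath γ₂ L₂ m b)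
    (hmix : ∀ u ∈ Icc 0 L₁, ∀ v ∈ Icc 0 L₂, dist (γ₁ u) (γ₂ v) = L₁ - u + v) :
    IsGeodesicPath (pathAppend γ₁ γ₂ L₁) (L₁ + L₂) a b where
  nonneg := add_nonneg h₁.nonneg h₂.nonneg
  dist_eq u hu v hv := by
    wlog huv : u ≤ v generalizing u v
    · rw [dist_comm, abs_sub_comm]; exact this v hv u hu (le_of_not_ge huv)
    rw [abs_sub_comm, abs_of_nonneg (sub_nonneg.2 huv)]
    rcases le_or_gt v L₁ with hv₁ | hv₁
    · rw [pathAppend_of_le (huv.trans hv₁), pathAppend_of_le hv₁,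
        h₁.dist_eq u ⟨hu.1, huv.trans hv₁⟩ v ⟨hv.1, hv₁⟩, abs_sub_comm,
        abs_of_nonneg (sub_nonneg.2 huv)]
    have hv' : v - L₁ ∈ Icc 0 L₂ := ⟨by linarith, by linarith [hv.2]⟩
    rcases le_or_gt u L₁ with hu₁ | hu₁
    · rw [pathAppend_of_le hu₁, pathAppend_of_lt hv₁, hmix u ⟨hu.1, hu₁⟩ _ hv']
      ring
    · rw [pathAppend_of_lt hu₁, pathAppend_of_lt hv₁,
        h₂.dist_eq _ ⟨by linarith, by linarith [hu.2]⟩ _ hv', abs_sub_comm,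
        abs_of_nonneg (by linarith)]
      ring
  source := by rw [pathAppend_zero h₁.nonneg, h₁.source]
  target := by rw [pathAppend_add (h₁.target.trans h₂.source.symm) h₂.nonneg, h₂.target]

lemma dist_pathAppend_le (h₁ : IsGeodesicPath γ₁ L₁ a m) (h₂ : IsGeodesicPath γ₂ L₂ m b)
    {u v : ℝ} (hu : u ∈ Icc 0 (L₁ + L₂)) (hv : v ∈ Icc 0 (L₁ + L₂)) (huv : u ≤ v) :
    dist (pathAppend γ₁ γ₂ L₁ u) (pathAppend γ₁ γ₂ L₁ v) ≤ v - u := by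
  rcases pathAppend_cases hu with ⟨hu', eu⟩ | ⟨hu₁, hu', eu⟩ <;>
    rcases pathAppend_cases hv with ⟨hv', ev⟩ | ⟨hv₁, hv', ev⟩ <;> rw [eu, ev]
  · rw [h₁.dist_eq u hu' v hv', abs_sub_comm, abs_of_nonneg (by linarith)]
  · calc dist (γ₁ u) (γ₂ (v - L₁)) ≤ dist (γ₁ u) m + dist m (γ₂ (v - L₁)) :=
          dist_triangle _ _ _
      _ = v - u := by rw [h₁.dist_target hu', h₂.dist_source hv']; ring
  · linarith [hv'.2]
  · rw [h₂.dist_eq _ hu' _ hv', abs_sub_comm, abs_of_nonneg (by linarith)]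
    linarith

lemma injOn_pathAppend (h₁ : IsGeodesicPath γ₁ L₁ a m) (h₂ : IsGeodesicPath γ₂ L₂ m b)
    (hmeet : γ₁ '' Icc 0 L₁ ∩ γ₂ '' Icc 0 L₂ ⊆ {m}) :
    InjOn (pathAppend γ₁ γ₂ L₁) (Icc 0 (L₁ + L₂)) := by
  have hmid : ∀ u ∈ Icc 0 L₁, ∀ v ∈ Icc 0 L₂, γ₁ u = γ₂ v → v = 0 := fun u hu v hv he =>
    h₂.injOn hv h₂.left_mem <| he.symm.trans <|
      (hmeet ⟨⟨u, hu, rfl⟩, ⟨v, hv, he.symm⟩⟩ : γ₁ u = m).trans h₂.source.symm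
  intro u hu v hv he
  rcases pathAppend_cases hu with ⟨hu', eu⟩ | ⟨hu₁, hu', eu⟩ <;>
    rcases pathAppend_cases hv with ⟨hv', ev⟩ | ⟨hv₁, hv', ev⟩ <;> rw [eu, ev] at he
  · exact h₁.injOn hu' hv' he
  · linarith [hmid u hu' _ hv' he]
  · linarith [hmid v hv' _ hu' he.symm]
  · linarith [h₂.injOn hu' hv' he]

lemma isArcFromTo_append (h₁ : IsGeodesicPath γ₁ L₁ a m) (h₂ : IsGeodesicPath γ₂ L₂ m b)
    (hmeet : γ₁ '' Icc 0 L₁ ∩ γ₂ '' Icc 0 L₂ ⊆ {m}) :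
    IsArcFromTo (pathAppend γ₁ γ₂ L₁ '' Icc 0 (L₁ + L₂)) a b := by
  refine ⟨L₁ + L₂, add_nonneg h₁.nonneg h₂.nonneg, _, ?_, h₁.injOn_pathAppend h₂ hmeet, ?_, ?_,
    rfl⟩
  · refine LipschitzOnWith.continuousOn (K := 1) <| LipschitzOnWith.of_dist_le_mul
      fun u hu v hv => ?_
    rw [Real.dist_eq, NNReal.coe_one, one_mul]
    rcases le_total u v with huv | huv
    · rw [abs_sub_comm, abs_of_nonneg (by linarith)]; exact h₁.dist_pathAppend_le h₂ hu hv huv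
    · rw [dist_comm, abs_of_nonneg (by linarith)]; exact h₁.dist_pathAppend_le h₂ hv hu huv
  · rw [pathAppend_zero h₁.nonneg, h₁.source]
  · rw [pathAppend_add (h₁.target.trans h₂.source.symm) h₂.nonneg, h₂.target]

end IsGeodesicPath

lemma Isometry.exists_isGeodesicPath {N : Type*} [MetricSpace N] {ι : X → N} (hι : Isometry ι)
    (hg : IsGeodesicSpace X) (x x' : X) :
    ∃ γ, IsGeodesicPath γ (dist (ι x) (ι x')) (ι x) (ι x') := by
  obtain ⟨γ, hγ⟩ := hg x x'
  exact ⟨_, hι.dist_eq x x' ▸ hγ.map hι⟩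

end GeodesicPath

section FourPoint

variable {P : Type*} [PseudoMetricSpace P]

def FourPointIneq (x y z w : P) : Prop :=
  dist x y + dist z w ≤ max (dist x z + dist y w) (dist x w + dist y z)

variable (P) in
def FourPointCondition : Prop :=
  ∀ x y z w : P, FourPointIneq x y z w

namespace FourPointIneq

variable {x y z w : P}

lemma swap_left (h : FourPointIneq x y z w) : FourPointIneq y x z w := by
  unfold FourPointIneq at *
  rcases le_max_iff.1 h with h | h
  · exact le_max_of_le_right (by linarith [dist_comm x y, dist_comm y z, dist_comm x w])
  · exact le_max_of_le_left (by linarith [dist_comm x y, dist_comm y w, dist_comm x z])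

lemma swap_right (h : FourPointIneq x y z w) : FourPointIneq x y w z := by
  unfold FourPointIneq at *
  rwa [dist_comm w z, max_comm]

lemma swap_pairs (h : FourPointIneq x y z w) : FourPointIneq z w x y := by
  unfold FourPointIneq at *
  rcases le_max_iff.1 h with h | h
  · exact le_max_of_le_left (by linarith [dist_comm x z, dist_comm y w])
  · exact le_max_of_le_right (by linarith [dist_comm x w, dist_comm y z])

end FourPointIneq

/-- The Gromov product `(x | y)_w`. -/
noncomputable def gromovProduct (w x y : P) : ℝ := (dist x w + dist y w - dist x y) / 2

lemma FourPointCondition.min_gromovProduct_le (h4 : FourPointCondition P) (w x y z : P) :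
    min (gromovProduct w x z) (gromovProduct w y z) ≤ gromovProduct w x y := by
  unfold gromovProduct
  rcases le_max_iff.1 (h4 x y z w) with h | h
  · exact (min_le_left _ _).trans (by linarith [dist_comm z w])
  · exact (min_le_right _ _).trans (by linarith [dist_comm z w, dist_comm y z])

end FourPoint

section ZeroHyperbolic

variable {X : Type*} [MetricSpace X] {a b x y z m n : X}

lemma IsBetween.dist_le (h : IsBetween x m y) : dist x m ≤ dist x y := by
  unfold IsBetween at h; linarith [dist_nonneg (x := m) (y := y)]

lemma FourPointCondition.dist_eq_abs_of_isBetween (h4 : FourPointCondition X)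
    (hm : IsBetween x m y) (hn : IsBetween x n y) : dist m n = |dist x m - dist x n| := by
  refine le_antisymm ?_ (by simpa only [dist_comm] using abs_dist_sub_le m n x)
  unfold IsBetween at hm hn
  rcases le_max_iff.1 (h4 x y m n) with h | h
  · exact (by linarith [dist_comm y n] : dist m n ≤ dist x m - dist x n).trans (le_abs_self _)
  · exact (by linarith [dist_comm y m] : dist m n ≤ -(dist x m - dist x n)).trans
      (neg_le_abs _)

lemma FourPointCondition.apply_dist_eq_of_isBetween (h4 : FourPointCondition X)
    {γ : ℝ → X} {L : ℝ} (hγ : IsGeodesicPath γ L a b) (hm : IsBetween a m b) :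
    γ (dist a m) = m := by
  have ht : dist a m ∈ Icc 0 L := ⟨dist_nonneg, hγ.dist_source_target ▸ hm.dist_le⟩
  rw [← dist_eq_zero, h4.dist_eq_abs_of_isBetween (hγ.isBetween ht) hm, hγ.dist_source ht,
    sub_self, abs_zero]

/-- The median is the point of `[x, y]` at distance `(y | z)_x` from `x`. -/
lemma FourPointCondition.exists_isBetween (h4 : FourPointCondition X) (hg : IsGeodesicSpace X)
    (x y z : X) : ∃ m, IsBetween x m y ∧ IsBetween x m z ∧ IsBetween y m z := by
  obtain ⟨γ, hγ⟩ := hg x y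
  set t := gromovProduct x y z with ht_def
  unfold gromovProduct at ht_def
  have ht : t ∈ Icc 0 (dist x y) := by
    constructor <;> linarith [dist_triangle y x z, dist_triangle z y x, dist_comm x y,
      dist_comm y z, dist_comm x z]
  refine ⟨γ t, hγ.isBetween ht, ?_⟩
  have hx := hγ.dist_source ht
  have hy := hγ.dist_target ht
  have hlow := dist_triangle x (γ t) z
  unfold IsBetween
  constructor <;> rcases le_max_iff.1 (h4 x y (γ t) z) with h | h <;>
    linarith [dist_comm y (γ t), dist_comm x y, dist_comm x z, dist_comm y z]

lemma Isometry.fourPointIneq_iff {N : Type*} [MetricSpace N] {ι : X → N} (hι : Isometry ι)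
    {x₁ x₂ x₃ x₄ : X} : FourPointIneq (ι x₁) (ι x₂) (ι x₃) (ι x₄) ↔ FourPointIneq x₁ x₂ x₃ x₄ := by
  simp only [FourPointIneq, hι.dist_eq]

lemma FourPointCondition.fourPointIneq_of_dist_eq_add {N : Type*} [MetricSpace N]
    (h4 : FourPointCondition X) {ι : X → N} (hι : Isometry ι) {w : N} {x₀ : X} {c : ℝ}
    (hw : ∀ x, dist (ι x) w = dist x x₀ + c) (x₁ x₂ x₃ : X) :
    FourPointIneq (ι x₁) (ι x₂) (ι x₃) w := by
  have h := h4 x₁ x₂ x₃ x₀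
  unfold FourPointIneq at h ⊢
  simp only [hι.dist_eq, hw]
  rcases le_max_iff.1 h with h | h
  · exact le_max_of_le_left (by linarith)
  · exact le_max_of_le_right (by linarith)

end ZeroHyperbolic

section RTree

variable {X : Type*} [MetricSpace X] {a b m : X} {t : Set X}

namespace IsArcFromTo

lemma left_mem (ht : IsArcFromTo t a b) : a ∈ t := by
  obtain ⟨ℓ, hℓ, δ, -, -, h0, -, rfl⟩ := ht
  exact ⟨0, ⟨le_rfl, hℓ⟩, h0⟩

lemma right_mem (ht : IsArcFromTo t a b) : b ∈ t := by
  obtain ⟨ℓ, hℓ, δ, -, -, -, hℓb, rfl⟩ := ht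
  exact ⟨ℓ, ⟨hℓ, le_rfl⟩, hℓb⟩

lemma isPreconnected (ht : IsArcFromTo t a b) : IsPreconnected t := by
  obtain ⟨ℓ, -, δ, hδ, -, -, -, rfl⟩ := ht
  exact isPreconnected_Icc.image δ hδ

/-- Removing a point `δ t₀` splits the arc into the closed pieces `δ '' [0, t₀]` and
`δ '' [t₀, ℓ]`. -/
lemma subset_of_isPreconnected (ht : IsArcFromTo t a b) {S : Set X} (hS : IsPreconnected S)
    (hSt : S ⊆ t) (ha : a ∈ S) (hb : b ∈ S) : t ⊆ S := by
  obtain ⟨ℓ, hℓ, δ, hδ, hinj, rfl, rfl, rfl⟩ := ht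
  rintro _ ⟨t₀, ht₀, rfl⟩
  by_contra hz
  have hclosed : ∀ {u v}, Icc u v ⊆ Icc 0 ℓ → IsClosed (δ '' Icc u v) := fun h =>
    (isCompact_Icc.image_of_continuousOn (hδ.mono h)).isClosed
  have h₁ : Icc 0 t₀ ⊆ Icc 0 ℓ := Icc_subset_Icc le_rfl ht₀.2
  have h₂ : Icc t₀ ℓ ⊆ Icc 0 ℓ := Icc_subset_Icc ht₀.1 le_rfl
  have hsplit : ∀ s₁ ∈ Icc 0 t₀, ∀ s₂ ∈ Icc t₀ ℓ, δ s₁ = δ s₂ → s₁ = t₀ ∧ s₂ = t₀ := by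
    intro s₁ hs₁ s₂ hs₂ he
    have := hinj (h₁ hs₁) (h₂ hs₂) he
    exact ⟨le_antisymm hs₁.2 (this ▸ hs₂.1), le_antisymm (this ▸ hs₁.2) hs₂.1⟩
  obtain ⟨w, hwS, hw₁, hw₂⟩ := hS _ _ (hclosed h₁).isOpen_compl (hclosed h₂).isOpen_compl
    (by
      rintro w hwS
      rw [← compl_inter]
      rintro ⟨⟨s₁, hs₁, rfl⟩, ⟨s₂, hs₂, he⟩⟩
      exact hz ((hsplit s₁ hs₁ s₂ hs₂ he.symm).1 ▸ hwS))
    ⟨δ ℓ, hb, fun ⟨s, hs, he⟩ => hz ((hsplit s hs ℓ ⟨ht₀.2, le_rfl⟩ he).2 ▸ hb)⟩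
    ⟨δ 0, ha, fun ⟨s, hs, he⟩ => hz ((hsplit 0 ⟨le_rfl, ht₀.1⟩ s hs he.symm).1 ▸ ha)⟩
  obtain ⟨s, hs, rfl⟩ := hSt hwS
  rcases le_total s t₀ with h | h
  · exact hw₁ ⟨s, ⟨hs.1, h⟩, rfl⟩
  · exact hw₂ ⟨s, ⟨h, hs.2⟩, rfl⟩

end IsArcFromTo

lemma FourPointCondition.isOpen_setOf_gromovProduct_nonpos (h4 : FourPointCondition X)
    (m a : X) : IsOpen {z | z ≠ m ∧ gromovProduct m a z ≤ 0} := by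
  refine Metric.isOpen_iff.2 fun z ⟨hzm, hz⟩ =>
    ⟨dist z m / 2, half_pos (dist_pos.2 hzm), fun z' hz' => ?_⟩
  rw [Metric.mem_ball] at hz'
  have hm : dist z m ≤ dist z z' + dist z' m := dist_triangle _ _ _
  have hzz' : 0 < gromovProduct m z z' := by
    unfold gromovProduct; linarith [dist_comm z z', dist_pos.2 hzm]
  refine ⟨fun h => ?_, ?_⟩
  · subst h; linarith [dist_comm z z', dist_pos.2 hzm]
  · by_contra! h
    linarith [h4.min_gromovProduct_le m a z z', lt_min h hzz']

/-- If `m` were missing, the sign of `(a | ·)_m` would disconnect the arc. -/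
lemma FourPointCondition.mem_of_isArcFromTo (h4 : FourPointCondition X)
    (hm : IsBetween a m b) (ht : IsArcFromTo t a b) : m ∈ t := by
  rcases eq_or_ne m a with rfl | hma
  · exact ht.left_mem
  by_contra hmt
  have hU : IsOpen {z | 0 < gromovProduct m a z} :=
    isOpen_lt continuous_const (by unfold gromovProduct; fun_prop)
  obtain ⟨z, -, hzU, -, hzV⟩ := ht.isPreconnected _ _ hU (h4.isOpen_setOf_gromovProduct_nonpos m a)
    (fun z hz => (lt_or_ge 0 (gromovProduct m a z)).imp id fun h => ⟨fun hzm => hmt (hzm ▸ hz), h⟩)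
    ⟨a, ht.left_mem, by
      show 0 < gromovProduct m a a
      unfold gromovProduct; linarith [dist_pos.2 hma.symm, dist_self a]⟩
    ⟨b, ht.right_mem, fun hbm => hmt (hbm ▸ ht.right_mem), by
      unfold IsBetween at hm; unfold gromovProduct; linarith [dist_comm m b]⟩
  exact absurd hzU (not_lt.2 hzV)

lemma FourPointCondition.eq_image_of_isArcFromTo (h4 : FourPointCondition X) {γ : ℝ → X}
    {L : ℝ} (hγ : IsGeodesicPath γ L a b) (ht : IsArcFromTo t a b) : t = γ '' Icc 0 L := by
  have hsub : γ '' Icc 0 L ⊆ t := by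
    rintro _ ⟨u, hu, rfl⟩
    exact h4.mem_of_isArcFromTo (hγ.isBetween hu) ht
  exact (ht.subset_of_isPreconnected hγ.isArcFromTo.isPreconnected hsub
    hγ.isArcFromTo.left_mem hγ.isArcFromTo.right_mem).antisymm hsub

lemma isRTree_of_isGeodesicSpace (hg : IsGeodesicSpace X) (h4 : FourPointCondition X) :
    IsRTree X := fun a b =>
  let ⟨_, hγ⟩ := hg a b
  ⟨_, hγ.isArcFromTo, hγ.isGeodesicSegmentFromTo, fun _ ht => h4.eq_image_of_isArcFromTo hγ ht⟩

namespace IsRTree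

lemma isGeodesicSpace (hT : IsRTree X) : IsGeodesicSpace X := fun a b => by
  obtain ⟨-, -, ⟨ℓ, hℓ, γ, hγ, h0, hL, -⟩, -⟩ := hT a b
  have hpath : IsGeodesicPath γ ℓ a b := ⟨hℓ, hγ, h0, hL⟩
  exact ⟨γ, hpath.dist_source_target ▸ hpath⟩

lemma isBetween_of_mem (hT : IsRTree X) (ht : IsArcFromTo t a b) (hm : m ∈ t) :
    IsBetween a m b := by
  obtain ⟨s, -, ⟨ℓ, hℓ, γ, hγ, h0, hL, rfl⟩, huniq⟩ := hT a b
  obtain ⟨u, hu, rfl⟩ := huniq t ht ▸ hm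
  exact IsGeodesicPath.isBetween ⟨hℓ, hγ, h0, hL⟩ hu

/-- The last point `γ t` of `[x, y]` lying on `[x, z]` is a median: the concatenation of
`[y, γ t]` and `[γ t, z]` is an arc, hence it is the segment `[y, z]`. -/
lemma exists_isBetween_of_isGeodesicPath (hT : IsRTree X) {γ : ℝ → X} {L : ℝ} {x y : X}
    (hγ : IsGeodesicPath γ L x y) (z : X) :
    ∃ t ∈ Icc 0 L, IsBetween x (γ t) z ∧ IsBetween y (γ t) z := by
  obtain ⟨σ, hσ⟩ := hT.isGeodesicSpace x z
  set S := Icc 0 L ∩ γ ⁻¹' (σ '' Icc 0 (dist x z))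
  have hSc : IsClosed S := hγ.continuousOn.preimage_isClosed_of_isClosed isClosed_Icc
    (isCompact_Icc.image_of_continuousOn hσ.continuousOn).isClosed
  have hSbdd : BddAbove S := ⟨L, fun u hu => hu.1.2⟩
  obtain ⟨htL, u, hu, hσu⟩ := hSc.csSup_mem
    ⟨0, hγ.left_mem, 0, hσ.left_mem, hσ.source.trans hγ.source.symm⟩ hSbdd
  set t := sSup S
  have hut : u = t := by rw [← hσ.dist_source hu, hσu, hγ.dist_source htL]
  subst hut
  have h₁ : IsGeodesicPath (fun s => γ (L - s)) (L - t) y (γ t) := by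
    simpa using hγ.reverse.restrict (t := L - t) ⟨by linarith [htL.2], by linarith [htL.1]⟩
  have h₂ : IsGeodesicPath (fun s => σ (s + t)) (dist x z - t) (γ t) z := hσu ▸ hσ.shift hu
  have hmeet : (fun s => γ (L - s)) '' Icc 0 (L - t) ∩ (fun s => σ (s + t)) '' Icc 0 (dist x z - t)
      ⊆ {γ t} := by
    rintro _ ⟨⟨s, hs, rfl⟩, ⟨v, hv, he⟩⟩
    have hsS : L - s ∈ S := ⟨⟨by linarith [hs.2, htL.1], by linarith [hs.1]⟩,
      v + t, ⟨by linarith [hv.1, hu.1], by linarith [hv.2]⟩, he⟩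
    have := le_csSup hSbdd hsS
    rw [mem_singleton_iff, ← show L - s = t by linarith [hs.2]]
  refine ⟨t, htL, hσu ▸ hσ.isBetween hu, hT.isBetween_of_mem (h₁.isArcFromTo_append h₂ hmeet)
    ⟨L - t, ⟨h₁.nonneg, by linarith [h₂.nonneg]⟩, ?_⟩⟩
  rw [pathAppend_of_le le_rfl, sub_sub_cancel]

lemma fourPointCondition (hT : IsRTree X) : FourPointCondition X := by
  intro x y z w
  obtain ⟨γ, hγ⟩ := hT.isGeodesicSpace x y
  obtain ⟨t₁, ht₁, hxz, hyz⟩ := hT.exists_isBetween_of_isGeodesicPath hγ z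
  obtain ⟨t₂, ht₂, hxw, hyw⟩ := hT.exists_isBetween_of_isGeodesicPath hγ w
  wlog h : t₁ ≤ t₂ generalizing z w t₁ t₂
  · exact (this w z t₂ ht₂ hxw hyw t₁ ht₁ hxz hyz (le_of_not_ge h)).swap_right
  refine le_max_of_le_right ?_
  have hzw := dist_triangle4 z (γ t₁) (γ t₂) w
  have h₁₂ := hγ.dist_eq t₁ ht₁ t₂ ht₂
  rw [abs_sub_comm, abs_of_nonneg (by linarith)] at h₁₂
  unfold IsBetween at hxw hyz
  linarith [hγ.dist_source ht₂, hγ.dist_target ht₁, dist_comm y (γ t₁), dist_comm z (γ t₁)]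

end IsRTree

end RTree

section Completion

open UniformSpace

variable {X : Type*} [MetricSpace X]

lemma FourPointCondition.completion (h4 : FourPointCondition X) :
    FourPointCondition (Completion X) := by
  have hclosed : ∀ x y : Completion X, IsClosed {p : Completion X × Completion X |
      FourPointIneq x y p.1 p.2} := fun x y => isClosed_le (by fun_prop) (by fun_prop)
  intro x y z w
  refine Completion.induction_on₂ x y (p := fun x y => ∀ z w, FourPointIneq x y z w) ?_
    (fun x y z w => Completion.induction_on₂ z w (hclosed _ _) fun z w => ?_) z w
  · simp only [ofPred_forall]
    exact isClosed_iInter fun z => isClosed_iInter fun w =>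
      isClosed_le (by fun_prop) (by fun_prop)
  · simpa only [FourPointIneq, Completion.dist_eq] using h4 x y z w

lemma FourPointCondition.dist_apply_le (h4 : FourPointCondition X) {γ γ' : ℝ → X}
    {a b a' b' : X} {L L' s : ℝ} (hγ : IsGeodesicPath γ L a b) (hγ' : IsGeodesicPath γ' L' a' b')
    (hs : s ∈ Icc 0 L) (hs' : s ∈ Icc 0 L') :
    dist (γ s) (γ' s) ≤ dist a a' + dist b b' + |L - L'| := by
  have h := h4 a b (γ s) (γ' s)
  unfold FourPointIneq at h
  rw [hγ.dist_source_target, hγ.dist_source hs, dist_comm b (γ s), hγ.dist_target hs] at h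
  have hb := dist_triangle b b' (γ' s)
  have ha := dist_triangle a a' (γ' s)
  rw [dist_comm b' (γ' s), hγ'.dist_target hs'] at hb
  rw [hγ'.dist_source hs'] at ha
  rcases le_max_iff.1 h with h | h
  · linarith [neg_abs_le (L - L'), dist_nonneg (x := a) (y := a')]
  · linarith [abs_nonneg (L - L'), dist_nonneg (x := b) (y := b')]

lemma FourPointCondition.dist_apply_min_le (h4 : FourPointCondition X) {γ γ' : ℝ → X}
    {a b a' b' : X} {L L' t : ℝ} (hγ : IsGeodesicPath γ L a b)
    (hγ' : IsGeodesicPath γ' L' a' b') (ht : 0 ≤ t) :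
    dist (γ (min t L)) (γ' (min t L')) ≤ dist a a' + dist b b' + 2 * |L - L'| := by
  have hmin : |min t L - min t L'| ≤ |L - L'| := by
    simpa using abs_min_sub_min_le_max t L t L'
  have hs : min t L ∈ Icc 0 L := ⟨le_min ht hγ.nonneg, min_le_right _ _⟩
  have hs' : min t L' ∈ Icc 0 L' := ⟨le_min ht hγ'.nonneg, min_le_right _ _⟩
  rcases le_total (min t L) (min t L') with h | h
  · have := h4.dist_apply_le hγ hγ' hs ⟨hs.1, h.trans hs'.2⟩
    have h' := hγ'.dist_eq _ ⟨hs.1, h.trans hs'.2⟩ _ hs'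
    linarith [dist_triangle (γ (min t L)) (γ' (min t L)) (γ' (min t L')), le_abs_self (L - L'),
      abs_sub_comm (min t L) (min t L')]
  · have := h4.dist_apply_le hγ hγ' ⟨hs'.1, h.trans hs.2⟩ hs'
    have h' := hγ.dist_eq _ hs _ ⟨hs'.1, h.trans hs.2⟩
    linarith [dist_triangle (γ (min t L)) (γ (min t L')) (γ' (min t L')), le_abs_self (L - L')]

lemma FourPointCondition.lipschitzWith_apply_min (h4 : FourPointCondition X)
    {γ : X → X → ℝ → X} (hγ : ∀ p q, IsGeodesicPath (γ p q) (dist p q) p q) {t : ℝ}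
    (ht : 0 ≤ t) : LipschitzWith 6 fun x : X × X => γ x.1 x.2 (min t (dist x.1 x.2)) :=
  LipschitzWith.of_dist_le_mul fun x y => by
    have h := h4.dist_apply_min_le (hγ x.1 x.2) (hγ y.1 y.2) ht
    have hL := dist_dist_dist_le x.1 x.2 y.1 y.2
    rw [Real.dist_eq] at hL
    rw [NNReal.coe_ofNat, Prod.dist_eq]
    linarith [le_max_left (dist x.1 y.1) (dist x.2 y.2),
      le_max_right (dist x.1 y.1) (dist x.2 y.2)]

/-- The clamped geodesics `t ↦ γ p q (min t (dist p q))` depend Lipschitz-continuously on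
`(p, q)`, so they extend to the completion, and the geodesic identities pass to the limit. -/
lemma IsGeodesicSpace.completion (hg : IsGeodesicSpace X) (h4 : FourPointCondition X) :
    IsGeodesicSpace (Completion X) := by
  choose γ hγ using hg
  set F : ℝ → X → X → Completion X := fun t p q => γ p q (min t (dist p q))
  have hF : ∀ t, 0 ≤ t → UniformContinuous₂ (F t) := fun t ht =>
    (Completion.uniformContinuous_coe X).comp (h4.lipschitzWith_apply_min hγ ht).uniformContinuous
  have hcont : ∀ t, Continuous fun x : Completion X × Completion X =>
      Completion.extension₂ (F t) x.1 x.2 := fun t =>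
    (Completion.uniformContinuous_extension₂ (F t)).continuous
  have hcoe : ∀ t, 0 ≤ t → ∀ p q : X,
      Completion.extension₂ (F t) p q = γ p q (min t (dist p q)) := fun t ht =>
    Completion.extension₂_coe_coe (hF t ht)
  have hmem : ∀ t, 0 ≤ t → ∀ p q : X, min t (dist p q) ∈ Icc 0 (dist p q) := fun t ht p q =>
    ⟨le_min ht dist_nonneg, min_le_right _ _⟩
  intro a b
  refine ⟨fun t => Completion.extension₂ (F t) a b, dist_nonneg, fun u hu v hv => ?_, ?_, ?_⟩
  · have key : dist (Completion.extension₂ (F u) a b) (Completion.extension₂ (F v) a b) =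
        |min u (dist a b) - min v (dist a b)| := by
      refine Completion.induction_on₂ a b (isClosed_eq (by fun_prop) (by fun_prop)) fun p q => ?_
      rw [hcoe u hu.1, hcoe v hv.1, Completion.dist_eq, Completion.dist_eq,
        (hγ p q).dist_eq _ (hmem u hu.1 p q) _ (hmem v hv.1 p q)]
    rwa [min_eq_left hu.2, min_eq_left hv.2] at key
  · refine Completion.induction_on₂ a b (isClosed_eq (by fun_prop) (by fun_prop)) fun p q => ?_
    rw [hcoe 0 le_rfl, min_eq_left dist_nonneg, (hγ p q).source]
  · have key : ∀ t, 0 ≤ t → dist (Completion.extension₂ (F t) a b) b =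
        dist a b - min t (dist a b) := fun t ht => by
      refine Completion.induction_on₂ a b (isClosed_eq (by fun_prop) (by fun_prop)) fun p q => ?_
      rw [hcoe t ht, Completion.dist_eq, Completion.dist_eq, (hγ p q).dist_target (hmem t ht p q)]
    simpa using key (dist a b) dist_nonneg

end Completion

section Gate

open Filter Topology

variable {X Z : Type*} [MetricSpace X] [MetricSpace Z] {F : Z → X} {p : X → Z}

/-- `p` is a gate (nearest-point map) onto the image of `F`, recorded in the coordinates
of `Z`. -/
def IsGate (F : Z → X) (p : X → Z) : Prop :=
  ∀ x z, dist x (F z) = dist x (F (p x)) + dist (p x) z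

lemma IsGate.apply_eq_of_forall (hp : IsGate F p) {x : X} {z₀ : Z}
    (hz₀ : ∀ z, dist x (F z) = dist x (F z₀) + dist z₀ z) : p x = z₀ := by
  rw [← dist_eq_zero]
  linarith [hp x z₀, hz₀ (p x), dist_nonneg (x := p x) (y := z₀), dist_comm (p x) z₀]

lemma IsGate.apply_eq_of_isGeodesicPath (hp : IsGate F p) (hF : Isometry F) {σ : ℝ → X} {L s : ℝ}
    {x : X} (hσ : IsGeodesicPath σ L (F (p x)) x) (hs : s ∈ Icc 0 L) : p (σ s) = p x := by
  refine hp.apply_eq_of_forall fun z => le_antisymm ?_ ?_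
  · calc dist (σ s) (F z) ≤ dist (σ s) (F (p x)) + dist (F (p x)) (F z) := dist_triangle _ _ _
      _ = _ := by rw [hF.dist_eq]
  · have := dist_triangle x (σ s) (F z)
    rw [hp x z, dist_comm x, dist_comm x, hσ.dist_source_target, hσ.dist_target hs] at this
    rw [dist_comm (σ s), hσ.dist_source hs]
    linarith

lemma FourPointCondition.exists_apply_eq_of_isBetween (h4 : FourPointCondition X)
    (hgZ : IsGeodesicSpace Z) (hF : Isometry F) {u v : Z} {m : X} (hm : IsBetween (F u) m (F v)) :
    ∃ w, F w = m := by
  obtain ⟨σ, hσ⟩ := hgZ u v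
  have hFσ := hσ.map hF
  rw [← hF.dist_eq] at hFσ
  exact ⟨σ _, h4.apply_dist_eq_of_isBetween hFσ hm⟩

lemma FourPointCondition.exists_forall_dist_le [CompleteSpace Z] [Nonempty Z]
    (h4 : FourPointCondition X) (hgX : IsGeodesicSpace X) (hgZ : IsGeodesicSpace Z)
    (hF : Isometry F) (x : X) : ∃ z₀, ∀ z, dist x (F z₀) ≤ dist x (F z) := by
  set ρ := ⨅ z, dist x (F z)
  have hρ : ∀ z, ρ ≤ dist x (F z) := ciInf_le ⟨0, forall_mem_range.2 fun _ => dist_nonneg⟩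
  have hε : Tendsto (fun n : ℕ => 1 / ((n : ℝ) + 1)) atTop (𝓝 0) :=
    tendsto_one_div_add_atTop_nhds_zero_nat
  choose q hq using fun n : ℕ => exists_lt_of_ciInf_lt (lt_add_of_pos_right ρ
    (Nat.one_div_pos_of_nat (n := n)))
  -- a median of `x`, `F (q n)`, `F (q m)` lies on the image, hence is at least `ρ` from `x`
  have hqq : ∀ n m, dist (q n) (q m) ≤ 1 / ((n : ℝ) + 1) + 1 / ((m : ℝ) + 1) := fun n m => by
    obtain ⟨c, hcn, hcm, hc⟩ := h4.exists_isBetween hgX x (F (q n)) (F (q m))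
    obtain ⟨w, rfl⟩ := h4.exists_apply_eq_of_isBetween hgZ hF hc
    unfold IsBetween at hcn hcm hc
    simp only [hF.dist_eq] at hcn hcm hc
    linarith [hρ w, hq n, hq m, dist_comm (q n) w]
  have hcauchy : CauchySeq q := by
    refine cauchySeq_of_le_tendsto_0' (fun n : ℕ => 2 * (1 / ((n : ℝ) + 1))) (fun n m hnm => ?_)
      (by simpa using hε.const_mul 2)
    have : 1 / ((m : ℝ) + 1) ≤ 1 / ((n : ℝ) + 1) :=
      one_div_le_one_div_of_le (by positivity) (by exact_mod_cast Nat.add_le_add_right hnm 1)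
    linarith [hqq n m]
  obtain ⟨z₀, hz₀⟩ := cauchySeq_tendsto_of_complete hcauchy
  refine ⟨z₀, fun z => (le_of_tendsto_of_tendsto' ?_ (by simpa using hε.const_add ρ)
    fun n => (hq n).le).trans (hρ z)⟩
  exact tendsto_const_nhds.dist (hF.continuous.tendsto z₀ |>.comp hz₀)

/-- The median of `x`, `F z₀` and `F z` lies on the image, so it is `F z₀`. -/
lemma FourPointCondition.dist_eq_add_of_forall_le (h4 : FourPointCondition X)
    (hgX : IsGeodesicSpace X) (hgZ : IsGeodesicSpace Z) (hF : Isometry F) {x : X} {z₀ : Z}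
    (hz₀ : ∀ z, dist x (F z₀) ≤ dist x (F z)) (z : Z) :
    dist x (F z) = dist x (F z₀) + dist z₀ z := by
  obtain ⟨c, hc₀, hc, hc₀₁⟩ := h4.exists_isBetween hgX x (F z₀) (F z)
  obtain ⟨w, rfl⟩ := h4.exists_apply_eq_of_isBetween hgZ hF hc₀₁
  unfold IsBetween at hc₀ hc hc₀₁
  simp only [hF.dist_eq] at hc₀ hc hc₀₁
  linarith [hz₀ w, dist_nonneg (x := w) (y := z₀), dist_comm z₀ w]

lemma FourPointCondition.exists_isGate [CompleteSpace Z] [Nonempty Z] (h4 : FourPointCondition X)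
    (hgX : IsGeodesicSpace X) (hgZ : IsGeodesicSpace Z) (hF : Isometry F) : ∃ p, IsGate F p := by
  choose p hp using h4.exists_forall_dist_le hgX hgZ hF
  exact ⟨p, fun x z => h4.dist_eq_add_of_forall_le hgX hgZ hF (hp x) z⟩

/-- Compare the median `m` of `x`, `x'`, `F (p x')` with `F (p x)`: both lie on the segment
`[x, F (p x')]`. -/
lemma IsGate.eq_or_dist_eq (hp : IsGate F p) (hF : Isometry F) (h4 : FourPointCondition X)
    (hgX : IsGeodesicSpace X) (hgZ : IsGeodesicSpace Z) (x x' : X) :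
    p x = p x' ∨ dist x x' = dist x (F (p x)) + dist (p x) (p x') + dist (F (p x')) x' := by
  obtain ⟨m, hm, hmx, hmx'⟩ := h4.exists_isBetween hgX x x' (F (p x'))
  have hP : IsBetween x (F (p x)) (F (p x')) := by
    rw [IsBetween, hF.dist_eq, ← hp x (p x')]
  have hmP := h4.dist_eq_abs_of_isBetween hmx hP
  have hx' := hp x' (p x)
  unfold IsBetween at hm hmx hmx' hP
  rw [hF.dist_eq] at hP
  rcases le_total (dist x m) (dist x (F (p x))) with h | h
  · left
    rw [abs_of_nonpos (by linarith)] at hmP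
    rw [← dist_eq_zero]
    linarith [dist_triangle x' m (F (p x)), dist_comm (p x') (p x), dist_comm x' m,
      dist_nonneg (x := p x) (y := p x')]
  · right
    rw [abs_of_nonneg (by linarith)] at hmP
    obtain ⟨w, rfl⟩ := h4.exists_apply_eq_of_isBetween hgZ hF
      (show IsBetween (F (p x)) m (F (p x')) by
        rw [IsBetween, hF.dist_eq, dist_comm, hmP]; linarith)
    have := hp x' w
    simp only [hF.dist_eq] at hmx hmx'
    linarith [dist_nonneg (x := p x') (y := w), dist_comm w (p x'), dist_comm x' (F w),
      dist_comm x' (F (p x'))]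

end Gate

section Glue

variable {X Y Z : Type*} [MetricSpace X] [MetricSpace Y] [MetricSpace Z] [Nonempty Z]
  {F : Z → X} {G : Z → Y} (hF : Isometry F) (hG : Isometry G) {p : X → Z} {q : Y → Z}

lemma dist_toGlueL_toGlueR (hq : IsGate G q) (x : X) (y : Y) :
    dist (toGlueL hF hG x) (toGlueR hF hG y) = dist x (F (q y)) + dist (G (q y)) y := by
  change (⨅ z, dist x (F z) + dist y (G z)) + 0 = _
  rw [add_zero]
  refine le_antisymm ((ciInf_le ⟨0, forall_mem_range.2 fun _ => by positivity⟩ (q y)).trans_eq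
    (by rw [dist_comm y])) (le_ciInf fun z => ?_)
  rw [hq y z, dist_comm y]
  linarith [dist_triangle x (F z) (F (q y)), hF.dist_eq z (q y), dist_comm z (q y)]

lemma dist_toGlueL_toGlueR_eq (hp : IsGate F p) (hq : IsGate G q) (x : X) (y : Y) :
    dist (toGlueL hF hG x) (toGlueR hF hG y) =
      dist x (F (p x)) + dist (p x) (q y) + dist (G (q y)) y := by
  rw [dist_toGlueL_toGlueR hF hG hq, hp x (q y)]

lemma toGlueL_or_toGlueR (n : GlueSpace hF hG) :
    (∃ x, toGlueL hF hG x = n) ∨ ∃ y, toGlueR hF hG y = n := by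
  obtain ⟨x | y, rfl⟩ := Quotient.mk''_surjective n
  exacts [.inl ⟨x, rfl⟩, .inr ⟨y, rfl⟩]

lemma fourPointIneq_toGlueL_toGlueL_toGlueR_toGlueR (h4Z : FourPointCondition Z)
    (hp : IsGate F p) (hq : IsGate G q) (x₁ x₂ : X) (y₁ y₂ : Y) :
    FourPointIneq (toGlueL hF hG x₁) (toGlueL hF hG x₂) (toGlueR hF hG y₁) (toGlueR hF hG y₂) := by
  have hx := dist_triangle4 x₁ (F (p x₁)) (F (p x₂)) x₂
  have hy := dist_triangle4 y₁ (G (q y₁)) (G (q y₂)) y₂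
  have h := h4Z (p x₁) (p x₂) (q y₁) (q y₂)
  unfold FourPointIneq at h ⊢
  simp only [(toGlueL_isometry hF hG).dist_eq, (toGlueR_isometry hF hG).dist_eq,
    dist_toGlueL_toGlueR_eq hF hG hp hq]
  rw [hF.dist_eq, dist_comm (F (p x₂))] at hx
  rw [hG.dist_eq, dist_comm y₁ (G (q y₁))] at hy
  rcases le_max_iff.1 h with h | h
  · exact le_max_of_le_left (by linarith)
  · exact le_max_of_le_right (by linarith)

lemma fourPointIneq_toGlueL_toGlueR_toGlueL_toGlueR (h4X : FourPointCondition X)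
    (h4Y : FourPointCondition Y) (h4Z : FourPointCondition Z) (hgX : IsGeodesicSpace X)
    (hgY : IsGeodesicSpace Y) (hgZ : IsGeodesicSpace Z) (hp : IsGate F p) (hq : IsGate G q)
    (x₁ x₂ : X) (y₁ y₂ : Y) :
    FourPointIneq (toGlueL hF hG x₁) (toGlueR hF hG y₁) (toGlueL hF hG x₂) (toGlueR hF hG y₂) := by
  unfold FourPointIneq
  simp only [(toGlueL_isometry hF hG).dist_eq, (toGlueR_isometry hF hG).dist_eq,
    dist_comm (toGlueR hF hG y₁), dist_toGlueL_toGlueR_eq hF hG hp hq]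
  rcases hp.eq_or_dist_eq hF h4X hgX hgZ x₁ x₂ with hpx | hx
  · exact le_max_of_le_right (by rw [hpx]; linarith)
  rcases hq.eq_or_dist_eq hG h4Y hgY hgZ y₁ y₂ with hqy | hy
  · exact le_max_of_le_right (by rw [hqy]; linarith)
  rw [hx, hy]
  rcases le_max_iff.1 (h4Z (p x₁) (q y₁) (p x₂) (q y₂)) with h | h
  · exact le_max_of_le_left (by linarith [dist_comm x₂ (F (p x₂)), dist_comm y₁ (G (q y₁))])
  · exact le_max_of_le_right (by linarith [dist_comm (q y₁) (p x₂)])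

lemma fourPointCondition_glueSpace (h4X : FourPointCondition X) (h4Y : FourPointCondition Y)
    (h4Z : FourPointCondition Z) (hgX : IsGeodesicSpace X) (hgY : IsGeodesicSpace Y)
    (hgZ : IsGeodesicSpace Z) (hp : IsGate F p) (hq : IsGate G q) :
    FourPointCondition (GlueSpace hF hG) := by
  have hι₁ := toGlueL_isometry hF hG
  have hι₂ := toGlueR_isometry hF hG
  have hL (y : Y) := h4X.fourPointIneq_of_dist_eq_add hι₁ (dist_toGlueL_toGlueR hF hG hq · y)
  have hR (x : X) := h4Y.fourPointIneq_of_dist_eq_add hι₂ (x₀ := G (p x)) fun y => by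
    rw [dist_comm, dist_toGlueL_toGlueR_eq hF hG hp hq, hq y (p x)]
    linarith [dist_comm (q y) (p x), dist_comm y (G (q y))]
  have hLLRR := fourPointIneq_toGlueL_toGlueL_toGlueR_toGlueR hF hG h4Z hp hq
  have hLRLR := fourPointIneq_toGlueL_toGlueR_toGlueL_toGlueR hF hG h4X h4Y h4Z hgX hgY hgZ hp hq
  intro n₁ n₂ n₃ n₄
  rcases toGlueL_or_toGlueR hF hG n₁ with ⟨x₁, rfl⟩ | ⟨y₁, rfl⟩ <;>
  rcases toGlueL_or_toGlueR hF hG n₂ with ⟨x₂, rfl⟩ | ⟨y₂, rfl⟩ <;>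
  rcases toGlueL_or_toGlueR hF hG n₃ with ⟨x₃, rfl⟩ | ⟨y₃, rfl⟩ <;>
  rcases toGlueL_or_toGlueR hF hG n₄ with ⟨x₄, rfl⟩ | ⟨y₄, rfl⟩
  · exact hι₁.fourPointIneq_iff.2 (h4X x₁ x₂ x₃ x₄)
  · exact hL y₄ x₁ x₂ x₃
  · exact (hL y₃ x₁ x₂ x₄).swap_right
  · exact hLLRR x₁ x₂ y₃ y₄
  · exact (hL y₂ x₃ x₄ x₁).swap_pairs
  · exact hLRLR x₁ x₃ y₂ y₄
  · exact (hLRLR x₁ x₄ y₂ y₃).swap_right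
  · exact (hR x₁ y₃ y₄ y₂).swap_pairs.swap_left
  · exact (hL y₁ x₃ x₄ x₂).swap_pairs.swap_left
  · exact (hLRLR x₂ x₃ y₁ y₄).swap_left
  · exact (hLRLR x₂ x₄ y₁ y₃).swap_left.swap_right
  · exact (hR x₂ y₃ y₄ y₁).swap_pairs
  · exact (hLLRR x₃ x₄ y₁ y₂).swap_pairs
  · exact (hR x₃ y₁ y₂ y₄).swap_right
  · exact hR x₄ y₁ y₂ y₃
  · exact hι₂.fourPointIneq_iff.2 (h4Y y₁ y₂ y₃ y₄)

lemma exists_isGeodesicPath_toGlueL_toGlueR (hgX : IsGeodesicSpace X) (hgY : IsGeodesicSpace Y)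
    (hq : IsGate G q) (x : X) (y : Y) :
    ∃ γ, IsGeodesicPath γ (dist (toGlueL hF hG x) (toGlueR hF hG y))
      (toGlueL hF hG x) (toGlueR hF hG y) := by
  obtain ⟨γ, hγ⟩ := hgX x (F (q y))
  obtain ⟨σ, hσ⟩ := hgY (G (q y)) y
  have h₁ := hγ.map (toGlueL_isometry hF hG)
  have h₂ := hσ.map (toGlueR_isometry hF hG)
  rw [show toGlueR hF hG (G (q y)) = toGlueL hF hG (F (q y)) from
    (congrFun (toGlue_commute hF hG) (q y)).symm] at h₂
  rw [dist_toGlueL_toGlueR hF hG hq]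
  refine ⟨_, h₁.append h₂ fun u hu v hv => ?_⟩
  simp only [Function.comp, dist_toGlueL_toGlueR hF hG hq, hq.apply_eq_of_isGeodesicPath hG hσ hv,
    hσ.dist_source hv, hγ.dist_target hu]

lemma isGeodesicSpace_glueSpace (hgX : IsGeodesicSpace X) (hgY : IsGeodesicSpace Y)
    (hq : IsGate G q) : IsGeodesicSpace (GlueSpace hF hG) := by
  intro n₁ n₂
  rcases toGlueL_or_toGlueR hF hG n₁ with ⟨x₁, rfl⟩ | ⟨y₁, rfl⟩ <;>
  rcases toGlueL_or_toGlueR hF hG n₂ with ⟨x₂, rfl⟩ | ⟨y₂, rfl⟩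
  · exact (toGlueL_isometry hF hG).exists_isGeodesicPath hgX x₁ x₂
  · exact exists_isGeodesicPath_toGlueL_toGlueR hF hG hgX hgY hq x₁ y₂
  · obtain ⟨γ, hγ⟩ := exists_isGeodesicPath_toGlueL_toGlueR hF hG hgX hgY hq x₂ y₁
    exact ⟨_, dist_comm (toGlueR hF hG y₁) _ ▸ hγ.reverse⟩
  · exact (toGlueR_isometry hF hG).exists_isGeodesicPath hgY y₁ y₂

end Glue

section Amalgamation

open UniformSpace

lemma isRTree_of_subsingleton (X : Type*) [MetricSpace X] [Subsingleton X] : IsRTree X := by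
  refine isRTree_of_isGeodesicSpace (fun a b => ?_) fun x y z w => ?_
  · obtain rfl := Subsingleton.elim a b
    refine ⟨fun _ => a, dist_nonneg, fun u hu v hv => ?_, rfl, rfl⟩
    rw [dist_self, Icc_self, mem_singleton_iff] at hu hv
    simp [hu, hv]
  · simp [FourPointIneq, Subsingleton.elim x y, Subsingleton.elim z w]

theorem IsRTree.exists_amalgam {M₀ M₁ M₂ : Type u} [MetricSpace M₀] [MetricSpace M₁]
    [MetricSpace M₂] [Nonempty M₀] (h₀ : IsRTree M₀) (h₁ : IsRTree M₁) (h₂ : IsRTree M₂)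
    {f₁ : M₀ → M₁} {f₂ : M₀ → M₂} (hf₁ : Isometry f₁) (hf₂ : Isometry f₂) :
    ∃ (N : Type u) (_ : MetricSpace N) (g₁ : M₁ → N) (g₂ : M₂ → N),
      IsRTree N ∧ Isometry g₁ ∧ Isometry g₂ ∧ g₁ ∘ f₁ = g₂ ∘ f₂ := by
  have hgZ := h₀.isGeodesicSpace.completion h₀.fourPointCondition
  have hgX := h₁.isGeodesicSpace.completion h₁.fourPointCondition
  have hgY := h₂.isGeodesicSpace.completion h₂.fourPointCondition
  have h4X := h₁.fourPointCondition.completion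
  have h4Y := h₂.fourPointCondition.completion
  have hF := hf₁.completion_map
  have hG := hf₂.completion_map
  have : Nonempty (Completion M₀) := ‹Nonempty M₀›.map (↑)
  obtain ⟨p, hp⟩ := h4X.exists_isGate hgX hgZ hF
  obtain ⟨q, hq⟩ := h4Y.exists_isGate hgY hgZ hG
  refine ⟨GlueSpace hF hG, inferInstance, toGlueL hF hG ∘ (↑), toGlueR hF hG ∘ (↑),
    isRTree_of_isGeodesicSpace (isGeodesicSpace_glueSpace hF hG hgX hgY hq)
      (fourPointCondition_glueSpace hF hG h4X h4Y h₀.fourPointCondition.completion hgX hgY hgZ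
        hp hq),
    (toGlueL_isometry hF hG).comp Completion.coe_isometry,
    (toGlueR_isometry hF hG).comp Completion.coe_isometry, funext fun x => ?_⟩
  simpa [Completion.map_coe hf₁.uniformContinuous, Completion.map_coe hf₂.uniformContinuous]
    using congrFun (toGlue_commute hF hG) x

end Amalgamation

/-- ℝ-trees can be amalgamated: given ℝ-trees `M₀, M₁, M₂` and
isometric embeddings `f₁ : M₀ → M₁`, `f₂ : M₀ → M₂`, there are an ℝ-tree `N` and
isometric embeddings `g₁ : M₁ → N`, `g₂ : M₂ → N` with `g₁ ∘ f₁ = g₂ ∘ f₂`. -/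
theorem statement_6 {M₀ M₁ M₂ : Type u}
    [MetricSpace M₀] [MetricSpace M₁] [MetricSpace M₂]
    (h₀ : IsRTree M₀) (h₁ : IsRTree M₁) (h₂ : IsRTree M₂)
    (f₁ : M₀ → M₁) (f₂ : M₀ → M₂)
    (hf₁ : IsIsometric f₁) (hf₂ : IsIsometric f₂) :
    ∃ (N : Type u) (mN : MetricSpace N) (g₁ : M₁ → N) (g₂ : M₂ → N),
      @IsRTree N mN ∧ @IsIsometric M₁ N _ mN g₁ ∧ @IsIsometric M₂ N _ mN g₂ ∧
      g₁ ∘ f₁ = g₂ ∘ f₂ := by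
  suffices ∃ (N : Type u) (_ : MetricSpace N) (g₁ : M₁ → N) (g₂ : M₂ → N),
      IsRTree N ∧ Isometry g₁ ∧ Isometry g₂ ∧ g₁ ∘ f₁ = g₂ ∘ f₂ by
    obtain ⟨N, _, g₁, g₂, hN, hg₁, hg₂, hcomm⟩ := this
    exact ⟨N, _, g₁, g₂, hN, hg₁.dist_eq, hg₂.dist_eq, hcomm⟩
  rcases isEmpty_or_nonempty M₀ with hM₀ | hM₀
  · rcases isEmpty_or_nonempty M₁ with hM₁ | ⟨⟨a₁⟩⟩
    · exact ⟨M₂, _, isEmptyElim, id, h₂, isometry_subsingleton, isometry_id, funext isEmptyElim⟩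
    rcases isEmpty_or_nonempty M₂ with hM₂ | ⟨⟨a₂⟩⟩
    · exact ⟨M₁, _, id, isEmptyElim, h₁, isometry_id, isometry_subsingleton, funext isEmptyElim⟩
    obtain ⟨N, _, g₁, g₂, hN, hg₁, hg₂, -⟩ := (isRTree_of_subsingleton PUnit.{u + 1}).exists_amalgam
      h₁ h₂ (isometry_subsingleton (f := fun _ => a₁)) (isometry_subsingleton (f := fun _ => a₂))
    exact ⟨N, _, g₁, g₂, hN, hg₁, hg₂, funext isEmptyElim⟩
  · exact h₀.exists_amalgam h₁ h₂ (Isometry.of_dist_eq hf₁) (Isometry.of_dist_eq hf₂)
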